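/- arXiv:0907.1739 — 2 statements merged into one kernel-verified Lean document; each statement's English description precedes it below -/
import Mathlib

section
/- For all integers n ≥ 1 and 1 ≤ k ≤ n, the recursion F_n^k = Σ_{i=0}^{k} binom(k, i) * F_{n-k+i}^{2i} holds, where binom(k, i) = k!/(i!(k-i)!) is the binomial coefficient. -/
/-- An available signal sequence of length `2n`: a binary sequence (`true` = '1',
`false` = '0') of length `2n` with as many ones as zeros, such that every prefix
contains at least as many ones as zeros. -/
def IsAvail (n : ℕ) (w : List Bool) : Prop :=
  w.length = 2 * n ∧ w.count true = n ∧ w.count false = n ∧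
  ∀ k : ℕ, (w.take k).count false ≤ (w.take k).count true

/-- `S n`: the number of available signal sequences of length `2n`. -/
noncomputable def numAvail (n : ℕ) : ℕ :=
  Nat.card {w : List Bool // IsAvail n w}

/-- `F n k`: the number of available signal sequences of length `2n`
whose first `k` symbols all equal '1'. -/
noncomputable def numAvailF (n k : ℕ) : ℕ :=
  Nat.card {w : List Bool // IsAvail n w ∧ w.take k = List.replicate k true}

/-!
Once a sequence starts with a prefix in which every prefix has at least as many ones as zeros,
the constraints on the rest depend only on the numbers of ones and zeros in that prefix. So such a
prefix can be swapped for another with the same excess of ones, shifting `n` by the difference of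
their numbers of zeros. Splitting on the symbol after `e + 1` leading ones then gives the Pascal
rule `F_{n+1}^{e+1} = F_{n+1}^{e+2} + F_n^e`, and applying it `k` times starting from `F_n^k`
spreads the binomial weights over the terms `F_{n-k+i}^{2i}`.
-/

open Finset

def PrefixBalanced (w : List Bool) : Prop :=
  ∀ m, (w.take m).count false ≤ (w.take m).count true

theorem prefixBalanced_replicate_true (k : ℕ) : PrefixBalanced (List.replicate k true) := by
  intro m
  simp [List.take_replicate, List.count_replicate]

theorem prefixBalanced_append_iff {a : List Bool} (ha : PrefixBalanced a) (t : List Bool) :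
    PrefixBalanced (a ++ t) ↔
      ∀ m, a.count false + (t.take m).count false ≤ a.count true + (t.take m).count true := by
  simp only [PrefixBalanced, List.take_append, List.count_append]
  constructor
  · intro h m
    simpa [List.take_of_length_le] using h (a.length + m)
  · intro h m
    by_cases hm : m ≤ a.length
    · simpa [Nat.sub_eq_zero_of_le hm] using ha m
    · simpa [List.take_of_length_le (by omega : a.length ≤ m)] using h (m - a.length)

theorem isAvail_append_iff {n : ℕ} {a : List Bool} (ha : PrefixBalanced a) (t : List Bool) :
    IsAvail n (a ++ t) ↔
      a.count true + t.count true = n ∧ a.count false + t.count false = n ∧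
        ∀ m, a.count false + (t.take m).count false ≤ a.count true + (t.take m).count true := by
  rw [IsAvail, ← prefixBalanced_append_iff ha, ← List.count_true_add_count_false, List.count_append,
    List.count_append]
  constructor
  · rintro ⟨-, htrue, hfalse, hbal⟩
    exact ⟨htrue, hfalse, hbal⟩
  · rintro ⟨htrue, hfalse, hbal⟩
    exact ⟨by omega, htrue, hfalse, hbal⟩

theorem isAvail_append_iff_isAvail_append {n n' : ℕ} {a b : List Bool} (ha : PrefixBalanced a)
    (hb : PrefixBalanced b) (htrue : n + b.count true = n' + a.count true)
    (hfalse : n + b.count false = n' + a.count false) (t : List Bool) :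
    IsAvail n (a ++ t) ↔ IsAvail n' (b ++ t) := by
  rw [isAvail_append_iff ha, isAvail_append_iff hb]
  refine and_congr (by omega) (and_congr (by omega) (forall_congr' fun m => ?_))
  omega

instance finite_isAvail_append (n : ℕ) (a : List Bool) : Finite {t // IsAvail n (a ++ t)} :=
  have : Finite {w | IsAvail n w} :=
    ((List.finite_length_eq Bool (2 * n)).subset fun _ hw => hw.1).to_subtype
  Finite.of_injective (fun t => (⟨a ++ t.1, t.2⟩ : {w | IsAvail n w}))
    fun _ _ h => Subtype.ext (List.append_cancel_left (congrArg Subtype.val h))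

def List.prefixSubtypeEquiv {α : Type*} (P : List α → Prop) (a : List α) :
    {w // P w ∧ a <+: w} ≃ {t // P (a ++ t)} where
  toFun w := ⟨w.1.drop a.length, by rw [← List.prefix_append_drop w.2.2]; exact w.2.1⟩
  invFun t := ⟨a ++ t.1, t.2, List.prefix_append a t.1⟩
  left_inv w := Subtype.ext (List.prefix_append_drop w.2.2).symm
  right_inv t := Subtype.ext (List.drop_left ..)

theorem numAvailF_eq_card (n k : ℕ) :
    numAvailF n k = Nat.card {t // IsAvail n (List.replicate k true ++ t)} := by
  rw [numAvailF, ← Nat.card_congr (List.prefixSubtypeEquiv _ _)]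
  refine Nat.card_congr (Equiv.subtypeEquivRight fun w => and_congr_right' ?_)
  rw [List.prefix_iff_eq_take, List.length_replicate, eq_comm]

theorem card_subtype_list_bool_eq_cons_add_cons (P : List Bool → Prop) [Finite {t // P t}] (hnil : ¬P []) :
    Nat.card {t // P t} = Nat.card {t // P (true :: t)} + Nat.card {t // P (false :: t)} := by
  let f : {t // P (true :: t)} ⊕ {t // P (false :: t)} → {t // P t} :=
    Sum.elim (fun t => ⟨true :: t.1, t.2⟩) (fun t => ⟨false :: t.1, t.2⟩)
  have hf : f.Bijective := by
    constructor
    · rintro (⟨s, _⟩ | ⟨s, _⟩) (⟨t, _⟩ | ⟨t, _⟩) h <;> simp_all [f]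
    · rintro ⟨_ | ⟨_ | _, t⟩, h⟩
      · exact absurd h hnil
      · exact ⟨.inr ⟨t, h⟩, rfl⟩
      · exact ⟨.inl ⟨t, h⟩, rfl⟩
  have := Finite.of_injective f hf.1
  have : Finite {t // P (true :: t)} := .sum_left {t // P (false :: t)}
  have : Finite {t // P (false :: t)} := .sum_right {t // P (true :: t)}
  rw [← Nat.card_sum, Nat.card_eq_of_bijective f hf]

theorem prefixBalanced_replicate_true_append_false (e : ℕ) :
    PrefixBalanced (List.replicate (e + 1) true ++ [false]) := by
  rw [prefixBalanced_append_iff (prefixBalanced_replicate_true _)]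
  intro m
  have : ([false].take m).count false ≤ 1 :=
    List.count_le_length.trans (List.length_take_le' _ _)
  rw [List.count_replicate_self, List.count_replicate, if_neg (by decide)]
  omega

theorem numAvailF_succ_succ {n e : ℕ} (he : e ≤ 2 * n) :
    numAvailF (n + 1) (e + 1) = numAvailF (n + 1) (e + 2) + numAvailF n e := by
  have hnil : ¬IsAvail (n + 1) (List.replicate (e + 1) true ++ []) := fun h => by
    have := h.1
    simp only [List.append_nil, List.length_replicate] at this
    omega
  have hfalse (t : List Bool) : IsAvail (n + 1) (List.replicate (e + 1) true ++ false :: t) ↔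
      IsAvail n (List.replicate e true ++ t) := by
    rw [List.append_cons]
    exact isAvail_append_iff_isAvail_append (prefixBalanced_replicate_true_append_false e)
      (prefixBalanced_replicate_true e) (by simp +arith) (by simp [List.count_replicate]) t
  have htrue (t : List Bool) :
      List.replicate (e + 1) true ++ true :: t = List.replicate (e + 2) true ++ t := by
    rw [List.append_cons, ← List.replicate_succ']
  rw [numAvailF_eq_card, numAvailF_eq_card, numAvailF_eq_card,
    card_subtype_list_bool_eq_cons_add_cons (fun t => IsAvail (n + 1) (List.replicate (e + 1) true ++ t)) hnil]
  congr 1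
  · simp only [htrue]
  · exact Nat.card_congr (Equiv.subtypeEquivRight hfalse)

theorem numAvailF_add_add_eq_sum_choose (m : ℕ) {n e : ℕ} (he : e ≤ 2 * n) :
    numAvailF (n + m) (e + m) = ∑ i ∈ range (m + 1), m.choose i * numAvailF (n + i) (e + 2 * i) := by
  induction m generalizing n e with
  | zero => simp
  | succ m ih =>
    have hpascal (i : ℕ) : numAvailF (n + 1 + i) (e + 1 + 2 * i) =
        numAvailF (n + i) (e + 2 * i) + numAvailF (n + (i + 1)) (e + 2 * (i + 1)) := by
      rw [show n + 1 + i = n + i + 1 by omega, show e + 1 + 2 * i = e + 2 * i + 1 by omega,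
        numAvailF_succ_succ (by omega), add_comm]
      ring_nf
    have := sum_choose_succ_mul (R := ℕ) (fun i _ => numAvailF (n + i) (e + 2 * i)) m
    simp only [Nat.cast_id] at this
    rw [this, show n + (m + 1) = n + 1 + m by omega, show e + (m + 1) = e + 1 + m by omega,
      ih (by omega), ← sum_add_distrib]
    exact sum_congr rfl fun i _ => by rw [hpascal, mul_add]

theorem numAvailF_recursion_general (n k : ℕ) (hkn : k ≤ n) :
    numAvailF n k = ∑ i ∈ Finset.range (k + 1), k.choose i * numAvailF (n - k + i) (2 * i) := by
  simpa [Nat.sub_add_cancel hkn] using numAvailF_add_add_eq_sum_choose k (n := n - k) (e := 0) (by omega)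

/-- The recursion `F n k = ∑_{i=0}^{k} C(k,i) F_{n-k+i}^{2i}` for `1 ≤ k ≤ n`. -/
theorem numAvailF_recursion (n k : ℕ) (hk : 1 ≤ k) (hkn : k ≤ n) :
    numAvailF n k = ∑ i ∈ Finset.range (k + 1), k.choose i * numAvailF (n - k + i) (2 * i) :=
  numAvailF_recursion_general n k hkn
end

section
/- Let n ≥ 1 and 0 ≤ i ≤ k ≤ n be integers. The number of available signal sequences of length 2n whose first 2k symbols consist of (k+i) ones followed by (k-i) zeros equals F_{n-k+i}^{2i}, i.e., it equals the number of available signal sequences of length 2(n-k+i) whose first 2i symbols are all 1. -/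
/-!
Removing the prefix `1^(k+i) 0^(k-i)` of a sequence and putting `1^(2i)` in its place is a
bijection. Both prefixes satisfy the prefix condition and have the same excess `2i` of ones
over zeros, so whether the prefix condition holds for the rest of the sequence depends only
on that excess; and the new sequence has `k - i` fewer ones and fewer zeros.
-/

namespace List

def IsBallot (w : List Bool) : Prop :=
  ∀ j : ℕ, (w.take j).count false ≤ (w.take j).count true

theorem isBallot_append_iff {p r : List Bool} :
    (p ++ r).IsBallot ↔ p.IsBallot ∧
      ∀ j, p.count false + (r.take j).count false ≤ p.count true + (r.take j).count true := by
  have hsplit (j : ℕ) (b : Bool) :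
      ((p ++ r).take j).count b = (p.take j).count b + (r.take (j - p.length)).count b := by
    rw [take_append, count_append]
  refine ⟨fun h => ⟨fun j => ?_, fun j => ?_⟩, fun ⟨hp, hr⟩ j => ?_⟩
  · have := h (min j p.length)
    rwa [hsplit, hsplit, ← take_eq_take_min, Nat.sub_eq_zero_of_le (min_le_right _ _), take_zero,
      count_nil, count_nil] at this
  · have := h (p.length + j)
    rwa [hsplit, hsplit, take_of_length_le (Nat.le_add_right _ _), Nat.add_sub_cancel_left] at this
  · rw [hsplit, hsplit]
    rcases le_total j p.length with hj | hj
    · rw [Nat.sub_eq_zero_of_le hj, take_zero, count_nil, count_nil]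
      exact hp j
    · rw [take_of_length_le hj]
      exact hr _

theorem isBallot_replicate_true (a : ℕ) : (replicate a true).IsBallot := fun j => by
  simp [take_replicate, count_replicate]

theorem isBallot_replicate_append_replicate {a b : ℕ} (h : b ≤ a) :
    (replicate a true ++ replicate b false).IsBallot := by
  refine isBallot_append_iff.2 ⟨isBallot_replicate_true a, fun j => ?_⟩
  simp only [take_replicate, count_replicate_self, count_replicate, beq_false, Bool.not_true,
    Bool.false_eq_true, ↓reduceIte]
  omega

def subtypeTakeEqEquiv {α : Type*} (p : List α) (Φ : List α → Prop) :
    {w // Φ w ∧ w.take p.length = p} ≃ {r // Φ (p ++ r)} where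
  toFun w := ⟨w.1.drop p.length, by
    obtain ⟨w, hΦ, hw⟩ := w
    rwa [← take_append_drop p.length w, hw] at hΦ⟩
  invFun r := ⟨p ++ r.1, r.2, take_left' rfl⟩
  left_inv w := Subtype.ext <|
    (congrArg (· ++ w.1.drop p.length) w.2.2).symm.trans (take_append_drop _ _)
  right_inv r := Subtype.ext <| drop_left' rfl

end List

theorem isAvail_iff {n : ℕ} {w : List Bool} :
    IsAvail n w ↔ w.count true = n ∧ w.count false = n ∧ w.IsBallot := by
  rw [IsAvail, List.IsBallot, ← List.count_true_add_count_false]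
  constructor
  · exact fun ⟨_, ht, hf, hb⟩ => ⟨ht, hf, hb⟩
  · exact fun ⟨ht, hf, hb⟩ => ⟨by omega, ht, hf, hb⟩

theorem isAvail_append_iff_of_isBallot {p q r : List Bool} {n m : ℕ}
    (hp : p.IsBallot) (hq : q.IsBallot)
    (ht : p.count true + m = q.count true + n) (hf : p.count false + m = q.count false + n) :
    IsAvail n (p ++ r) ↔ IsAvail m (q ++ r) := by
  simp only [isAvail_iff, List.isBallot_append_iff, List.count_append, hp, hq, true_and]
  constructor
  · rintro ⟨hnt, hnf, hr⟩
    exact ⟨by omega, by omega, fun j => by have := hr j; omega⟩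
  · rintro ⟨hmt, hmf, hr⟩
    exact ⟨by omega, by omega, fun j => by have := hr j; omega⟩

theorem avail_prefix_reduction_general (n k i : ℕ) (hik : i ≤ k) (hkn : k ≤ n) :
    Nat.card {w : List Bool // IsAvail n w ∧
        w.take (2 * k) = List.replicate (k + i) true ++ List.replicate (k - i) false} =
      numAvailF (n - k + i) (2 * i) := by
  rw [numAvailF]
  set P := List.replicate (k + i) true ++ List.replicate (k - i) false
  set Q := List.replicate (2 * i) true
  have hP : P.length = 2 * k := by simp only [P, List.length_append, List.length_replicate]; omega
  have hQ : Q.length = 2 * i := List.length_replicate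
  have hPt : P.count true = k + i := by simp [P, List.count_replicate]
  have hPf : P.count false = k - i := by simp [P, List.count_replicate]
  have hQt : Q.count true = 2 * i := by simp [Q]
  have hQf : Q.count false = 0 := by simp [Q, List.count_replicate]
  have hswap (r : List Bool) : IsAvail n (P ++ r) ↔ IsAvail (n - k + i) (Q ++ r) :=
    isAvail_append_iff_of_isBallot (List.isBallot_replicate_append_replicate (by omega))
      (List.isBallot_replicate_true _) (by omega) (by omega)
  rw [← hP, ← hQ]
  calc Nat.card {w // IsAvail n w ∧ w.take P.length = P}
      = Nat.card {r // IsAvail n (P ++ r)} := Nat.card_congr (List.subtypeTakeEqEquiv P _)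
    _ = Nat.card {r // IsAvail (n - k + i) (Q ++ r)} :=
        Nat.card_congr (Equiv.subtypeEquivRight hswap)
    _ = Nat.card {v // IsAvail (n - k + i) v ∧ v.take Q.length = Q} :=
        (Nat.card_congr (List.subtypeTakeEqEquiv Q _)).symm

/-- Removing leading matched 0-1 pairs: the number of available signal sequences of
length `2n` whose first `2k` symbols are `k+i` ones followed by `k-i` zeros equals
`F (n-k+i) (2i)`. -/
theorem avail_prefix_reduction (n k i : ℕ) (hn : 1 ≤ n) (hik : i ≤ k) (hkn : k ≤ n) :
    Nat.card {w : List Bool // IsAvail n w ∧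
        w.take (2 * k) = List.replicate (k + i) true ++ List.replicate (k - i) false} =
      numAvailF (n - k + i) (2 * i) :=
  avail_prefix_reduction_general n k i hik hkn
end
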